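/- Let ψ : ℚ[T,X,Y] → ℚ[x,y,z] be the ℚ-algebra homomorphism determined by T ↦ 4z + 2y − x, X ↦ y(y − x) + (z/2)(7y + 7z − 3x), Y ↦ (z/2)(y − x + z). Then for every integer i ≥ 0, ψ((2i+1)²·((i(i+1)/2)(X + Y) − Y) − (i²(i+1)²/2)·T²) = (−1/2)·(z − i²x − iy)·(z − (i+1)²x + (i+1)y) in ℚ[x,y,z]. -/
import Mathlib


open MvPolynomial Finset

/-- The ℚ-algebra homomorphism ℚ[T,X,Y] → ℚ[x,y,z] (with `T = X 0, X = X 1, Y = X 2`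
in the source and `x = X 0, y = X 1, z = X 2` in the target) determined by
`T ↦ 4z + 2y − x`, `X ↦ y(y − x) + (z/2)(7y + 7z − 3x)`, `Y ↦ (z/2)(y − x + z)`. -/
noncomputable def psi : MvPolynomial (Fin 3) ℚ →ₐ[ℚ] MvPolynomial (Fin 3) ℚ :=
  aeval ![4 * X 2 + 2 * X 1 - X 0,
          X 1 * (X 1 - X 0) + C (1/2 : ℚ) * X 2 * (7 * X 1 + 7 * X 2 - 3 * X 0),
          C (1/2 : ℚ) * X 2 * (X 1 - X 0 + X 2)]

/-- For every integer `i ≥ 0`: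
`ψ((2i+1)²·((i(i+1)/2)(X + Y) − Y) − (i²(i+1)²/2)·T²)
  = (−1/2)·(z − i²x − iy)·(z − (i+1)²x + (i+1)y)`. -/
theorem psi_maps_factor (i : ℕ) :
    psi (C ((2 * (i : ℚ) + 1) ^ 2) *
          (C ((i : ℚ) * ((i : ℚ) + 1) / 2) * (X 1 + X 2) - X 2) -
        C ((i : ℚ) ^ 2 * ((i : ℚ) + 1) ^ 2 / 2) * X 0 ^ 2) =
      C (-(1/2) : ℚ) *
        ((X 2 - C ((i : ℚ) ^ 2) * X 0 - C (i : ℚ) * X 1) *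
          (X 2 - C (((i : ℚ) + 1) ^ 2) * X 0 + C ((i : ℚ) + 1) * X 1)) := by
  apply MvPolynomial.funext
  intro v
  simp [psi, algebraMap_eq, Fin.isValue]
  ring
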